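/- arXiv:2201.02439 — 2 statements merged into one kernel-verified Lean document; each statement's English description precedes it below -/
import Mathlib

section
/- Let A, B be bounded selfadjoint operators on a complex Hilbert space H and assume I_≥(A,B) = [λ₋, λ₊] with λ₋ < λ₊. Then for every λ ∈ (λ₋, λ₊) one has ker(A + λB) = Q(A) ∩ Q(B) = ker A ∩ ker B. -/
/-!
A selfadjoint operator `T ≥ 0` annihilates every `x` with `⟪T x, x⟫ = 0`: writing `T = S * S`
with `S = √T` gives `⟪T x, x⟫ = ‖S x‖ ^ 2`. Both endpoint operators `A + λ₋ B` and `A + λ₊ B` are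
positive, so on `Q(A) ∩ Q(B)` they vanish, and subtracting them shows that `A` and `B` vanish there.
Conversely, if `(A + λ B) x = 0` with `λ₋ < λ < λ₊`, the affine function `ρ ↦ ⟪(A + ρ B) x, x⟫`
is zero at `λ` and nonnegative at `λ₋` and `λ₊`, hence identically zero, i.e. `x ∈ Q(A) ∩ Q(B)`.
-/

open scoped InnerProductSpace

noncomputable section

variable {H : Type*} [NormedAddCommGroup H] [InnerProductSpace ℂ H] [CompleteSpace H]

/-- The (real) quadratic form associated to an operator. -/
def qf (T : H →L[ℂ] H) (x : H) : ℝ := (⟪T x, x⟫_ℂ).re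

/-- Positive semidefinite operator. -/
def PosSemidef (T : H →L[ℂ] H) : Prop := ∀ x, 0 ≤ qf T x

/-- Positive definite operator (uniformly positive). -/
def PosDef (T : H →L[ℂ] H) : Prop := ∃ α > 0, ∀ x, α * ‖x‖ ^ 2 ≤ qf T x

/-- The set of parameters where the pencil `A + ρ B` is positive semidefinite. -/
def Ige (A B : H →L[ℂ] H) : Set ℝ := {ρ | PosSemidef (A + (ρ : ℂ) • B)}

/-- The set of parameters where the pencil `A + ρ B` is positive definite. -/
def Igt (A B : H →L[ℂ] H) : Set ℝ := {ρ | PosDef (A + (ρ : ℂ) • B)}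

/-- An operator is indefinite if its quadratic form takes both signs. -/
def Indefinite (T : H →L[ℂ] H) : Prop := (∃ x, 0 < qf T x) ∧ (∃ x, qf T x < 0)

omit [CompleteSpace H] in
lemma qf_add_ofReal_smul (A B : H →L[ℂ] H) (ρ : ℝ) (x : H) :
    qf (A + (ρ : ℂ) • B) x = qf A x + ρ * qf B x := by
  simp [qf]

omit [CompleteSpace H] in
lemma qf_eq_zero_of_apply_eq_zero {T : H →L[ℂ] H} {x : H} (hx : T x = 0) : qf T x = 0 := by
  simp [qf, hx]

lemma IsSelfAdjoint.add_ofReal_smul {A B : H →L[ℂ] H} (hA : IsSelfAdjoint A)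
    (hB : IsSelfAdjoint B) (ρ : ℝ) : IsSelfAdjoint (A + (ρ : ℂ) • B) :=
  hA.add (IsSelfAdjoint.smul (r := (ρ : ℂ)) (Complex.conj_ofReal ρ) hB)

lemma PosSemidef.nonneg {T : H →L[ℂ] H} (hpsd : PosSemidef T) (hT : IsSelfAdjoint T) :
    0 ≤ T :=
  (ContinuousLinearMap.nonneg_iff_isPositive T).mpr
    (ContinuousLinearMap.isPositive_def'.mpr ⟨hT, hpsd⟩)

lemma PosSemidef.apply_eq_zero_of_qf_eq_zero {T : H →L[ℂ] H} (hpsd : PosSemidef T)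
    (hT : IsSelfAdjoint T) {x : H} (hx : qf T x = 0) : T x = 0 := by
  set S := CFC.sqrt T
  have hS : IsSelfAdjoint S := (CFC.sqrt_nonneg T).isSelfAdjoint
  have hSS : S * S = T := CFC.sqrt_mul_sqrt_self T (hpsd.nonneg hT)
  have hqf : qf T x = ‖S x‖ ^ 2 := by
    have hsymm : ⟪S (S x), x⟫_ℂ = ⟪S x, S x⟫_ℂ := hS.isSymmetric (S x) x
    rw [qf, ← hSS, mul_apply_eq_comp, hsymm]
    exact inner_self_eq_norm_sq (𝕜 := ℂ) (S x)
  have hSx : S x = 0 := norm_eq_zero.mp (pow_eq_zero_iff two_ne_zero |>.mp (hqf ▸ hx))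
  rw [← hSS, mul_apply_eq_comp, hSx, map_zero]

section Pencil

variable {A B : H →L[ℂ] H} {a b : ℝ} {x : H}

omit [CompleteSpace H] in
lemma qf_eq_zero_of_posSemidef_pencil (ha : PosSemidef (A + (a : ℂ) • B))
    (hb : PosSemidef (A + (b : ℂ) • B)) {l : ℝ} (hl : l ∈ Set.Ioo a b)
    (hx : qf (A + (l : ℂ) • B) x = 0) : qf A x = 0 ∧ qf B x = 0 := by
  have hxa := ha x
  have hxb := hb x
  rw [qf_add_ofReal_smul] at hx hxa hxb
  have hxB : qf B x = 0 := by nlinarith [hl.1, hl.2]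
  exact ⟨by simpa [hxB] using hx, hxB⟩

lemma apply_eq_zero_of_posSemidef_pencil (hA : IsSelfAdjoint A) (hB : IsSelfAdjoint B)
    (hab : a ≠ b) (ha : PosSemidef (A + (a : ℂ) • B)) (hb : PosSemidef (A + (b : ℂ) • B))
    (hxA : qf A x = 0) (hxB : qf B x = 0) : A x = 0 ∧ B x = 0 := by
  have hqf (ρ : ℝ) : qf (A + (ρ : ℂ) • B) x = 0 := by
    rw [qf_add_ofReal_smul, hxA, hxB, mul_zero, add_zero]
  have hxa : A x + (a : ℂ) • B x = 0 :=
    ha.apply_eq_zero_of_qf_eq_zero (hA.add_ofReal_smul hB a) (hqf a)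
  have hxb : A x + (b : ℂ) • B x = 0 :=
    hb.apply_eq_zero_of_qf_eq_zero (hA.add_ofReal_smul hB b) (hqf b)
  have hsmul : ((b : ℂ) - a) • B x = 0 := by
    rw [sub_smul, ← add_sub_add_left_eq_sub (c := A x), hxa, hxb, sub_zero]
  have hBx : B x = 0 :=
    (smul_eq_zero.mp hsmul).resolve_left (sub_ne_zero.mpr (by exact_mod_cast hab.symm))
  exact ⟨by simpa [hBx] using hxa, hBx⟩

end Pencil

theorem stmt6 (A B : H →L[ℂ] H) (hA : IsSelfAdjoint A) (hB : IsSelfAdjoint B)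
    (lm lp : ℝ) (hlt : lm < lp) (hI : Ige A B = Set.Icc lm lp) :
    ∀ l ∈ Set.Ioo lm lp,
      (LinearMap.ker ((A + (l : ℂ) • B : H →L[ℂ] H) : H →ₗ[ℂ] H) : Set H)
          = {x : H | qf A x = 0} ∩ {x : H | qf B x = 0} ∧
      {x : H | qf A x = 0} ∩ {x : H | qf B x = 0}
          = (LinearMap.ker (A : H →ₗ[ℂ] H) : Set H) ∩ (LinearMap.ker (B : H →ₗ[ℂ] H) : Set H) := by
  intro l hl
  have hlm : PosSemidef (A + (lm : ℂ) • B) :=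
    show lm ∈ Ige A B from hI ▸ Set.left_mem_Icc.mpr hlt.le
  have hlp : PosSemidef (A + (lp : ℂ) • B) :=
    show lp ∈ Ige A B from hI ▸ Set.right_mem_Icc.mpr hlt.le
  have hQ_ker : {x : H | qf A x = 0} ∩ {x : H | qf B x = 0}
      ⊆ (LinearMap.ker (A : H →ₗ[ℂ] H) : Set H) ∩ (LinearMap.ker (B : H →ₗ[ℂ] H) : Set H) :=
    fun x ⟨hxA, hxB⟩ => apply_eq_zero_of_posSemidef_pencil hA hB hlt.ne hlm hlp hxA hxB
  refine ⟨subset_antisymm ?_ ?_, subset_antisymm hQ_ker ?_⟩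
  · exact fun x hx =>
      qf_eq_zero_of_posSemidef_pencil hlm hlp hl (qf_eq_zero_of_apply_eq_zero hx)
  · intro x hx
    obtain ⟨hxA, hxB⟩ : A x = 0 ∧ B x = 0 := hQ_ker hx
    simp [hxA, hxB]
  · exact fun x ⟨hxA, hxB⟩ =>
      ⟨qf_eq_zero_of_apply_eq_zero hxA, qf_eq_zero_of_apply_eq_zero hxB⟩
end
end

section
/- Let A, B be bounded selfadjoint operators on a complex Hilbert space H with B indefinite, assume ⟨Ax,x⟩ ≥ 0 for every x ∈ Q(B), and let λ₋ ≤ λ₊ be such that I_≥(A,B) = [λ₋, λ₊]. Then for any α > 0 the following are equivalent: (i) ⟨Ax, x⟩ ≥ α‖x‖² for every x ∈ Q(B); (ii) there exist η₋ ≤ η₊ with [η₋, η₊] ⊆ (λ₋, λ₊) such that A + ρB − αI is positive semidefinite for every ρ ∈ [η₋, η₊]. -/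
/-!
Given `⟪A x, x⟫ ≥ α ‖x‖²` on the neutral vectors of `B`, an S-lemma yields `ρ` with
`A + ρ B - α I ≥ 0`: for `u`, `v` of opposite `B`-signs, scaled so that their `B`-values cancel
and with a phase chosen to kill the `B`-cross term, both `u + ω v` and `u - ω v` are `B`-neutral,
and adding the two resulting inequalities for `A - α I` cancels its cross terms. The slack `α I`
absorbs `(σ - ρ) B` for `|σ - ρ| ≤ α / ‖B‖`, so `ρ` is an interior point of `I_≥(A, B)` and
`η₋ = η₊ = ρ` works. The converse follows by evaluating at neutral vectors.
-/

open scoped InnerProductSpace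

noncomputable section

variable {H : Type*} [NormedAddCommGroup H] [InnerProductSpace ℂ H] [CompleteSpace H]

section QuadraticForms

omit [CompleteSpace H]

theorem Complex.exists_norm_eq_one_re_mul_eq_zero (γ : ℂ) :
    ∃ ω : ℂ, ‖ω‖ = 1 ∧ (ω * γ).re = 0 := by
  refine ⟨Complex.I * Complex.exp (↑(-γ.arg) * Complex.I), ?_, ?_⟩
  · rw [norm_mul, Complex.norm_I, Complex.norm_exp_ofReal_mul_I, one_mul]
  · conv_lhs => rw [← Complex.norm_mul_exp_arg_mul_I γ]
    rw [mul_mul_mul_comm, ← Complex.exp_add]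
    simp

@[simp] theorem qf_add (T U : H →L[ℂ] H) (x : H) : qf (T + U) x = qf T x + qf U x := by
  simp [qf]

@[simp] theorem qf_sub (T U : H →L[ℂ] H) (x : H) : qf (T - U) x = qf T x - qf U x := by
  simp [qf]

@[simp] theorem qf_ofReal_smul (r : ℝ) (T : H →L[ℂ] H) (x : H) :
    qf ((r : ℂ) • T) x = r * qf T x := by
  simp [qf]

@[simp] theorem qf_one (x : H) : qf (1 : H →L[ℂ] H) x = ‖x‖ ^ 2 := by
  simp [qf, ← Complex.ofReal_pow]

theorem qf_smul_right (T : H →L[ℂ] H) (c : ℂ) (x : H) : qf T (c • x) = ‖c‖ ^ 2 * qf T x :=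
  T.reApplyInnerSelf_smul x

theorem qf_apply_add (T : H →L[ℂ] H) (p q : H) :
    qf T (p + q) = qf T p + qf T q + (⟪T p, q⟫_ℂ + ⟪T q, p⟫_ℂ).re := by
  simp only [qf, map_add, inner_add_left, inner_add_right, Complex.add_re]
  ring

theorem qf_add_smul (T : H →L[ℂ] H) (p q : H) (ε : ℂ) :
    qf T (p + ε • q) =
      qf T p + ‖ε‖ ^ 2 * qf T q + (ε * (⟪T p, q⟫_ℂ + (starRingEnd ℂ) ⟪T q, p⟫_ℂ)).re := by
  rw [qf_apply_add, qf_smul_right, map_smul, inner_smul_left, inner_smul_right]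
  simp only [Complex.add_re, Complex.add_im, Complex.mul_re, Complex.conj_re, Complex.conj_im]
  ring

theorem abs_qf_le (T : H →L[ℂ] H) (x : H) : |qf T x| ≤ ‖T‖ * ‖x‖ ^ 2 :=
  calc |qf T x| ≤ ‖⟪T x, x⟫_ℂ‖ := Complex.abs_re_le_norm _
    _ ≤ ‖T x‖ * ‖x‖ := norm_inner_le_norm _ _
    _ ≤ ‖T‖ * ‖x‖ * ‖x‖ := by gcongr; exact T.le_opNorm x
    _ = ‖T‖ * ‖x‖ ^ 2 := by ring

variable {S T : H →L[ℂ] H}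

theorem mul_qf_le_mul_qf_of_nonneg_on_neutral (hST : ∀ w, qf T w = 0 → 0 ≤ qf S w)
    {u v : H} (hu : 0 ≤ qf T u) (hv : qf T v ≤ 0) :
    qf T v * qf S u ≤ qf T u * qf S v := by
  set p : H := (√(-qf T v) : ℂ) • u
  set q : H := (√(qf T u) : ℂ) • v
  have hp : ∀ R : H →L[ℂ] H, qf R p = -qf T v * qf R u := fun R => by
    rw [qf_smul_right, Complex.norm_real, Real.norm_eq_abs, sq_abs, Real.sq_sqrt (by linarith)]
  have hq : ∀ R : H →L[ℂ] H, qf R q = qf T u * qf R v := fun R => by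
    rw [qf_smul_right, Complex.norm_real, Real.norm_eq_abs, sq_abs, Real.sq_sqrt hu]
  obtain ⟨ω, hω, hωγ⟩ :=
    Complex.exists_norm_eq_one_re_mul_eq_zero (⟪T p, q⟫_ℂ + (starRingEnd ℂ) ⟪T q, p⟫_ℂ)
  have hneutral : ∀ ε : ℂ, ‖ε‖ = 1 → (ε * (⟪T p, q⟫_ℂ + (starRingEnd ℂ) ⟪T q, p⟫_ℂ)).re = 0 →
      0 ≤ qf S (p + ε • q) := fun ε hε hre => by
    apply hST
    rw [qf_add_smul, hp, hq, hε, hre]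
    ring
  have h_plus := hneutral ω hω hωγ
  have h_minus := hneutral (-ω) (by rw [norm_neg, hω])
    (by rw [neg_mul, Complex.neg_re, hωγ, neg_zero])
  rw [qf_add_smul, hω, hp, hq] at h_plus
  rw [qf_add_smul, norm_neg, hω, neg_mul, Complex.neg_re, hp, hq] at h_minus
  linarith

theorem Indefinite.ne_zero (hT : Indefinite T) : T ≠ 0 := by
  rintro rfl
  obtain ⟨x, hx⟩ := hT.1
  simp [qf] at hx

/-- The parameter is the supremum of `-qf S u / qf T u` over `T`-positive `u`, which is
bounded by every such quotient over `T`-negative vectors. -/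
theorem exists_posSemidef_add_smul (hT : Indefinite T) (hST : ∀ w, qf T w = 0 → 0 ≤ qf S w) :
    ∃ ρ : ℝ, PosSemidef (S + (ρ : ℂ) • T) := by
  have hquot : ∀ {u v}, 0 < qf T u → qf T v < 0 → -qf S u / qf T u ≤ -qf S v / qf T v := by
    intro u v hu hv
    have := mul_qf_le_mul_qf_of_nonneg_on_neutral hST hu.le hv.le
    rw [le_div_iff_of_neg hv, div_mul_eq_mul_div, le_div_iff₀ hu]
    linarith
  set P := (fun u => -qf S u / qf T u) '' {u | 0 < qf T u}
  obtain ⟨u₀, hu₀⟩ := hT.1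
  obtain ⟨v₀, hv₀⟩ := hT.2
  have hPne : P.Nonempty := ⟨_, u₀, hu₀, rfl⟩
  have hPbdd : BddAbove P := ⟨_, by rintro _ ⟨u, hu, rfl⟩; exact hquot hu hv₀⟩
  refine ⟨sSup P, fun x => ?_⟩
  rw [qf_add, qf_ofReal_smul]
  rcases lt_trichotomy (qf T x) 0 with hx | hx | hx
  · have := csSup_le hPne (by rintro _ ⟨u, hu, rfl⟩; exact hquot hu hx)
    rw [le_div_iff_of_neg hx] at this
    linarith
  · simpa [hx] using hST x hx
  · have := le_csSup hPbdd ⟨x, hx, rfl⟩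
    rw [div_le_iff₀ hx] at this
    linarith

theorem mem_Ige_of_abs_sub_mul_norm_le {A B : H →L[ℂ] H} {ρ σ α : ℝ}
    (h : PosSemidef (A + (ρ : ℂ) • B - (α : ℂ) • 1)) (hσ : |σ - ρ| * ‖B‖ ≤ α) :
    σ ∈ Ige A B := by
  intro x
  have hx := h x
  simp only [qf_add, qf_sub, qf_ofReal_smul, qf_one] at hx ⊢
  have hdev : |(σ - ρ) * qf B x| ≤ α * ‖x‖ ^ 2 :=
    calc |(σ - ρ) * qf B x| ≤ |σ - ρ| * (‖B‖ * ‖x‖ ^ 2) := by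
          rw [abs_mul]; gcongr; exact abs_qf_le B x
      _ ≤ α * ‖x‖ ^ 2 := by rw [← mul_assoc]; gcongr
  linarith [neg_abs_le ((σ - ρ) * qf B x)]

end QuadraticForms

theorem stmt19_general (A B : H →L[ℂ] H)
    (hBind : Indefinite B)
    (lm lp : ℝ) (hI : Ige A B = Set.Icc lm lp)
    (α : ℝ) (hα : 0 < α) :
    (∀ x : H, qf B x = 0 → α * ‖x‖ ^ 2 ≤ qf A x) ↔
      ∃ ηm ηp : ℝ, ηm ≤ ηp ∧ Set.Icc ηm ηp ⊆ Set.Ioo lm lp ∧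
        ∀ ρ ∈ Set.Icc ηm ηp,
          PosSemidef (A + (ρ : ℂ) • B - (α : ℂ) • (1 : H →L[ℂ] H)) := by
  constructor
  · intro h
    obtain ⟨ρ, hρ⟩ := exists_posSemidef_add_smul (S := A - (α : ℂ) • 1) hBind fun w hw => by
      simpa only [qf_sub, qf_ofReal_smul, qf_one, sub_nonneg] using h w hw
    rw [sub_add_eq_add_sub] at hρ
    have hB : 0 < ‖B‖ := norm_pos_iff.mpr hBind.ne_zero
    have hδ : 0 < α / ‖B‖ := div_pos hα hB
    have hIcc : ∀ σ, |σ - ρ| ≤ α / ‖B‖ → σ ∈ Set.Icc lm lp := fun σ hσ =>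
      hI ▸ mem_Ige_of_abs_sub_mul_norm_le hρ ((le_div_iff₀ hB).mp hσ)
    have hlm := (hIcc (ρ - α / ‖B‖) (by rw [sub_sub_cancel_left, abs_neg, abs_of_pos hδ])).1
    have hlp := (hIcc (ρ + α / ‖B‖) (by rw [add_sub_cancel_left, abs_of_pos hδ])).2
    refine ⟨ρ, ρ, le_rfl, ?_, ?_⟩
    · rw [Set.Icc_self, Set.singleton_subset_iff]
      exact ⟨by linarith, by linarith⟩
    · rintro σ ⟨hρσ, hσρ⟩
      rwa [le_antisymm hσρ hρσ]
  · rintro ⟨ηm, ηp, hη, -, hpsd⟩ x hx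
    have := hpsd ηm ⟨le_rfl, hη⟩ x
    simp only [qf_sub, qf_add, qf_ofReal_smul, qf_one, hx] at this
    linarith

theorem stmt19 (A B : H →L[ℂ] H) (hA : IsSelfAdjoint A) (hB : IsSelfAdjoint B)
    (hBind : Indefinite B) (hQ : ∀ x, qf B x = 0 → 0 ≤ qf A x)
    (lm lp : ℝ) (hle : lm ≤ lp) (hI : Ige A B = Set.Icc lm lp)
    (α : ℝ) (hα : 0 < α) :
    (∀ x : H, qf B x = 0 → α * ‖x‖ ^ 2 ≤ qf A x) ↔
      ∃ ηm ηp : ℝ, ηm ≤ ηp ∧ Set.Icc ηm ηp ⊆ Set.Ioo lm lp ∧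
        ∀ ρ ∈ Set.Icc ηm ηp,
          PosSemidef (A + (ρ : ℂ) • B - (α : ℂ) • (1 : H →L[ℂ] H)) :=
  stmt19_general A B hBind lm lp hI α hα
end
end
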